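/- Let f, g, h ∈ R⟨X⟩ and let Q be a labelled quiver such that f is compatible with Q, g is uniformly compatible with Q, and h is obtained from f by a rewriting step using g, i.e. h = f + λ·a·g·b for some λ ∈ R and monomials a, b ∈ ⟨X⟩ with a·m_g·b ∈ supp(f) for some m_g ∈ supp(g). Then h is compatible with Q, the polynomials a, b, and a·g·b are uniformly compatible with Q, σ(h) ⊇ σ(f), and σ(a·g·b) ⊇ σ(f). If in addition f is uniformly compatible with Q, then h is uniformly compatible with Q and σ(a·g·b) = σ(f). -/

import Mathlib

open scoped BigOperators

/-- The free `R`-algebra `R⟨X⟩` on `X`, as the monoid algebra over `R`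
of the free monoid `⟨X⟩` of words over `X`. -/
abbrev FreeAlg (R X : Type*) [CommRing R] := MonoidAlgebra R (FreeMonoid X)

/-- The monomial in `R⟨X⟩` corresponding to a word `m ∈ ⟨X⟩`. -/
noncomputable def monom (R : Type*) [CommRing R] {X : Type*} (m : FreeMonoid X) : FreeAlg R X :=
  MonoidAlgebra.of R (FreeMonoid X) m

/-- `h` is obtained from `f` by a rewriting step using `g`: some monomial `m_g` in the
support of `g` divides a monomial `a·m_g·b` in the support of `f`, and
`h = f + λ·a·g·b` for some `λ ∈ R`. -/
def RewriteStep {R X : Type*} [CommRing R] (g f h : FreeAlg R X) : Prop :=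
  ∃ (a b mg : FreeMonoid X) (lam : R),
    mg ∈ (g.coeff : FreeMonoid X →₀ R).support ∧
    a * mg * b ∈ (f.coeff : FreeMonoid X →₀ R).support ∧
    h = f + lam • (monom R a * g * monom R b)

/-- `f` can be rewritten to `h` using the set `G`: there is a finite chain of rewriting
steps, each using an element of `G`, leading from `f` to `h`. -/
def RewritesTo {R X : Type*} [CommRing R] (G : Set (FreeAlg R X)) (f h : FreeAlg R X) : Prop :=
  Relation.ReflTransGen (fun p q => ∃ g ∈ G, RewriteStep g p q) f h

/-- Membership in the two-sided ideal `(F)` generated by `F`: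
`f` is a finite sum `Σᵢ aᵢ·fᵢ·bᵢ` with `aᵢ, bᵢ ∈ R⟨X⟩` and `fᵢ ∈ F`. -/
def MemIdeal {R X : Type*} [CommRing R] (F : Set (FreeAlg R X)) (f : FreeAlg R X) : Prop :=
  ∃ (n : ℕ) (a b g : Fin n → FreeAlg R X),
    (∀ i, g i ∈ F) ∧ f = ∑ i, a i * g i * b i

/-- A labelled quiver `Q = (V, E, X, s, t, l)`: a directed multigraph with vertex set `V`,
edge set `E`, source and target maps `s, t : E → V` and labelling `l : E → X`. -/
structure LabelledQuiver (V E X : Type*) where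
  src : E → V
  tgt : E → V
  lab : E → X

/-- Paths in a labelled quiver `Q`; `LQPath Q u w` is the type of paths with source `u` and
target `w`.  `nil v` is the empty path at `v`; `cons e p` appends the edge `e` after `p`. -/
inductive LQPath {V E X : Type*} (Q : LabelledQuiver V E X) : V → V → Type _ where
  | nil (v : V) : LQPath Q v v
  | cons {u : V} (e : E) (p : LQPath Q u (Q.src e)) : LQPath Q u (Q.tgt e)

namespace LQPath
variable {V E X : Type*} {Q : LabelledQuiver V E X}
/-- The label `l(p) = l(eₙ)⋯l(e₁) ∈ ⟨X⟩` of a path; the empty path has label `1`. -/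
def label : {u w : V} → LQPath Q u w → FreeMonoid X
  | _, _, .nil _ => 1
  | _, _, .cons e p => FreeMonoid.of (Q.lab e) * p.label
end LQPath

namespace LabelledQuiver

variable {V E X : Type*} (Q : LabelledQuiver V E X)

/-- The set of signatures `σ(m) = {(s(p), t(p)) : p a path in Q with l(p) = m}`. -/
def sigmaM (m : FreeMonoid X) : Set (V × V) :=
  {vw | ∃ p : LQPath Q vw.1 vw.2, p.label = m}

variable {R : Type*} [CommRing R]

/-- The set of signatures `σ(f) = ⋂_{m ∈ supp(f)} σ(m)` of a polynomial. -/
def sigmaP (f : FreeAlg R X) : Set (V × V) :=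
  ⋂ m ∈ (f.coeff : FreeMonoid X →₀ R).support, Q.sigmaM m

/-- `f` is compatible with `Q` if `σ(f) ≠ ∅`. -/
def Compatible (f : FreeAlg R X) : Prop :=
  (Q.sigmaP f).Nonempty

/-- `f` is uniformly compatible with `Q` if it is compatible and all monomials in its
support have the same set of signatures. -/
def UniformlyCompatible (f : FreeAlg R X) : Prop :=
  Q.Compatible f ∧
    ∀ m ∈ (f.coeff : FreeMonoid X →₀ R).support, ∀ m' ∈ (f.coeff : FreeMonoid X →₀ R).support,
      Q.sigmaM m = Q.sigmaM m'

/-- The set of sources `s(f)` of a polynomial: the projection of `σ(f)` to the first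
component. -/
def srcSet (f : FreeAlg R X) : Set V := Prod.fst '' Q.sigmaP f

/-- The set of targets `t(f)` of a polynomial: the projection of `σ(f)` to the second
component. -/
def tgtSet (f : FreeAlg R X) : Set V := Prod.snd '' Q.sigmaP f

end LabelledQuiver


namespace LQPath
variable {V E X : Type*} {Q : LabelledQuiver V E X}

def comp : {u v w : V} → LQPath Q u v → LQPath Q v w → LQPath Q u w
  | _, _, _, p, .nil _ => p
  | _, _, _, p, .cons e q => .cons e (p.comp q)

lemma label_comp : ∀ {u v w : V} (p : LQPath Q u v) (q : LQPath Q v w),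
    (p.comp q).label = q.label * p.label
  | _, _, _, _, .nil _ => by simp [comp, label]
  | _, _, _, p, .cons e q => by
    simp only [comp, label, label_comp p q, mul_assoc]

lemma split {u w : V} (p : LQPath Q u w) :
    ∀ (m1 m2 : FreeMonoid X), p.label = m1 * m2 →
    ∃ (v : V) (q : LQPath Q v w) (r : LQPath Q u v), q.label = m1 ∧ r.label = m2 := by
  induction p with
  | nil =>
    intro m1 m2 h
    have h' : m1.toList ++ m2.toList = ([] : List X) := by
      simpa [label, FreeMonoid.toList_mul] using congrArg FreeMonoid.toList h.symm
    obtain ⟨h1, h2⟩ := List.append_eq_nil_iff.mp h'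
    have hm1 : m1 = 1 := FreeMonoid.toList.injective (by simpa using h1)
    have hm2 : m2 = 1 := FreeMonoid.toList.injective (by simpa using h2)
    exact ⟨u, .nil u, .nil u, by simp [label, hm1], by simp [label, hm2]⟩
  | cons e p ih =>
    intro m1 m2 h
    induction m1 using FreeMonoid.recOn with
    | one =>
      exact ⟨Q.tgt e, .nil _, .cons e p, by simp [label], by rwa [one_mul] at h⟩
    | of_mul x m1' _ =>
      rw [mul_assoc] at h
      have h' : Q.lab e :: (label p).toList = x :: (m1' * m2).toList := by
        simpa [label, FreeMonoid.toList_mul] using congrArg FreeMonoid.toList h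
      obtain ⟨hx, hrest⟩ := List.cons_eq_cons.mp h'
      obtain ⟨v, q, r, hq, hr⟩ := ih m1' m2 (FreeMonoid.toList.injective hrest)
      exact ⟨v, .cons e q, r, by simp [label, hq, hx], hr⟩
end LQPath

section Aux
variable {V E X : Type*} (Q : LabelledQuiver V E X)

lemma sigmaM_mul_mem (m m' : FreeMonoid X) (u w : V) :
    (u, w) ∈ Q.sigmaM (m * m') ↔ ∃ v, (v, w) ∈ Q.sigmaM m ∧ (u, v) ∈ Q.sigmaM m' := by
  constructor
  · rintro ⟨p, hp⟩
    obtain ⟨v, q, r, hq, hr⟩ := p.split m m' hp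
    exact ⟨v, ⟨q, hq⟩, ⟨r, hr⟩⟩
  · rintro ⟨v, ⟨q, hq⟩, ⟨r, hr⟩⟩
    exact ⟨r.comp q, by rw [LQPath.label_comp, hq, hr]⟩

lemma sigmaM_conj_mono {m m' : FreeMonoid X} (h : Q.sigmaM m ⊆ Q.sigmaM m')
    (a b : FreeMonoid X) : Q.sigmaM (a * m * b) ⊆ Q.sigmaM (a * m' * b) := by
  rintro ⟨u, w⟩ hm
  rw [mul_assoc] at hm ⊢
  obtain ⟨v, ha, hmb⟩ := (sigmaM_mul_mem Q a (m * b) u w).mp hm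
  obtain ⟨v', hmm, hb⟩ := (sigmaM_mul_mem Q m b u v).mp hmb
  exact (sigmaM_mul_mem Q a (m' * b) u w).mpr
    ⟨v, ha, (sigmaM_mul_mem Q m' b u v).mpr ⟨v', h hmm, hb⟩⟩

lemma sigmaM_conj {m m' : FreeMonoid X} (h : Q.sigmaM m = Q.sigmaM m')
    (a b : FreeMonoid X) : Q.sigmaM (a * m * b) = Q.sigmaM (a * m' * b) :=
  subset_antisymm (sigmaM_conj_mono Q h.le a b) (sigmaM_conj_mono Q h.ge a b)

variable {R : Type*} [CommRing R]

lemma mem_support_conj (g : FreeAlg R X) (a b m' : FreeMonoid X) :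
    m' ∈ ((monom R a * g * monom R b).coeff : FreeMonoid X →₀ R).support ↔
      ∃ m ∈ (g.coeff : FreeMonoid X →₀ R).support, a * m * b = m' := by
  have h1 : ∀ y : R, (1 : R) * y = 0 ↔ y = 0 := by simp
  have h2 : ∀ y : R, y * (1 : R) = 0 ↔ y = 0 := by simp
  show m' ∈ (monom R a * g * monom R b : MonoidAlgebra R (FreeMonoid X)).coeff.support ↔ _
  rw [monom, MonoidAlgebra.of_apply, monom, MonoidAlgebra.of_apply,
    MonoidAlgebra.support_coeff_mul_single _ _ h2, MonoidAlgebra.support_coeff_single_mul _ _ h1]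
  simp only [Finset.mem_map, mulLeftEmbedding_apply, mulRightEmbedding_apply]
  constructor
  · rintro ⟨_, ⟨m, hm, rfl⟩, rfl⟩
    exact ⟨m, hm, rfl⟩
  · rintro ⟨m, hm, rfl⟩
    exact ⟨a * m, ⟨m, hm, rfl⟩, rfl⟩

lemma sigmaP_eq_of_uniform {f : FreeAlg R X} {m0 : FreeMonoid X}
    (hm0 : m0 ∈ (f.coeff : FreeMonoid X →₀ R).support)
    (huni : ∀ m ∈ (f.coeff : FreeMonoid X →₀ R).support, Q.sigmaM m = Q.sigmaM m0) :
    Q.sigmaP f = Q.sigmaM m0 := by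
  apply subset_antisymm
  · exact Set.biInter_subset_of_mem hm0
  · intro x hx
    rw [LabelledQuiver.sigmaP, Set.mem_iInter₂]
    intro m hm
    rw [huni m hm]
    exact hx

lemma sigmaP_subset_sigmaM {f : FreeAlg R X} {m0 : FreeMonoid X}
    (hm0 : m0 ∈ (f.coeff : FreeMonoid X →₀ R).support) : Q.sigmaP f ⊆ Q.sigmaM m0 :=
  Set.biInter_subset_of_mem hm0

end Aux

/-- If `f` is compatible with `Q`, `g` is uniformly compatible with `Q` and
`h = f + λ·a·g·b` is obtained from `f` by a rewriting step using `g`, then `h` is compatible,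
`a`, `b` and `a·g·b` are uniformly compatible, `σ(h) ⊇ σ(f)` and `σ(a·g·b) ⊇ σ(f)`;
if in addition `f` is uniformly compatible, then `h` is uniformly compatible and
`σ(a·g·b) = σ(f)`. -/
theorem rewriteStep_compatible {R V E X : Type*} [CommRing R] (Q : LabelledQuiver V E X)
    (f g h : FreeAlg R X) (lam : R) (a b mg : FreeMonoid X)
    (hmg : mg ∈ (g.coeff : FreeMonoid X →₀ R).support)
    (hmf : a * mg * b ∈ (f.coeff : FreeMonoid X →₀ R).support)
    (hh : h = f + lam • (monom R a * g * monom R b))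
    (hf : Q.Compatible f) (hg : Q.UniformlyCompatible g) :
    Q.Compatible h ∧
      Q.UniformlyCompatible (monom R a) ∧ Q.UniformlyCompatible (monom R b) ∧
      Q.UniformlyCompatible (monom R a * g * monom R b) ∧
      Q.sigmaP f ⊆ Q.sigmaP h ∧ Q.sigmaP f ⊆ Q.sigmaP (monom R a * g * monom R b) ∧
      (Q.UniformlyCompatible f →
        Q.UniformlyCompatible h ∧ Q.sigmaP (monom R a * g * monom R b) = Q.sigmaP f) := by
  classical
  -- abbreviations
  set agb := monom R a * g * monom R b with hagb
  have hσg : ∀ m ∈ (g.coeff : FreeMonoid X →₀ R).support, Q.sigmaM m = Q.sigmaM mg :=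
    fun m hm => hg.2 m hm mg hmg
  -- support of a·g·b
  have hsupp : ∀ m' ∈ (agb.coeff : FreeMonoid X →₀ R).support,
      ∃ m ∈ (g.coeff : FreeMonoid X →₀ R).support, a * m * b = m' :=
    fun m' hm' => (mem_support_conj g a b m').mp hm'
  have hmem : a * mg * b ∈ (agb.coeff : FreeMonoid X →₀ R).support :=
    (mem_support_conj g a b _).mpr ⟨mg, hmg, rfl⟩
  -- all monomials of a·g·b have signature σ(a·mg·b)
  have hσagb : ∀ m' ∈ (agb.coeff : FreeMonoid X →₀ R).support,
      Q.sigmaM m' = Q.sigmaM (a * mg * b) := by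
    intro m' hm'
    obtain ⟨m, hm, rfl⟩ := hsupp m' hm'
    exact sigmaM_conj Q (hσg m hm) a b
  have hPagb : Q.sigmaP agb = Q.sigmaM (a * mg * b) :=
    sigmaP_eq_of_uniform Q hmem hσagb
  have hfsub : Q.sigmaP f ⊆ Q.sigmaM (a * mg * b) := sigmaP_subset_sigmaM Q hmf
  have hfsubP : Q.sigmaP f ⊆ Q.sigmaP agb := hPagb ▸ hfsub
  -- support of h
  have hsupph : (h.coeff : FreeMonoid X →₀ R).support ⊆
      (f.coeff : FreeMonoid X →₀ R).support ∪ (agb.coeff : FreeMonoid X →₀ R).support := by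
    intro m hm
    rw [hh, MonoidAlgebra.coeff_add, MonoidAlgebra.coeff_smul] at hm
    rcases Finset.mem_union.mp (Finsupp.support_add hm) with h1 | h1
    · exact Finset.mem_union_left _ h1
    · exact Finset.mem_union_right _ (Finsupp.support_smul h1)
  have hfsubh : Q.sigmaP f ⊆ Q.sigmaP h := by
    intro x hx
    rw [LabelledQuiver.sigmaP, Set.mem_iInter₂]
    intro m hm
    rcases Finset.mem_union.mp (hsupph hm) with h1 | h1
    · exact Set.mem_iInter₂.mp hx m h1
    · rw [hσagb m h1]; exact hfsub hx
  -- nontriviality of R, support of monomials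
  have : Nontrivial R := nontrivial_of_ne _ _ (Finsupp.mem_support_iff.mp hmf)
  have hsa : ((monom R a : FreeAlg R X).coeff : FreeMonoid X →₀ R).support = {a} := by
    rw [monom, MonoidAlgebra.of_apply, MonoidAlgebra.coeff_single]
    exact Finsupp.support_single_ne_zero a one_ne_zero
  have hsb : ((monom R b : FreeAlg R X).coeff : FreeMonoid X →₀ R).support = {b} := by
    rw [monom, MonoidAlgebra.of_apply, MonoidAlgebra.coeff_single]
    exact Finsupp.support_single_ne_zero b one_ne_zero
  -- σ(a) and σ(b) nonempty
  obtain ⟨⟨u, w⟩, hx⟩ := hf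
  have hxm : (u, w) ∈ Q.sigmaM (a * mg * b) := hfsub hx
  obtain ⟨v, hva, hvmb⟩ := (sigmaM_mul_mem Q a (mg * b) u w).mp (by rwa [mul_assoc] at hxm)
  obtain ⟨v', hvm, hvb⟩ := (sigmaM_mul_mem Q mg b u v).mp hvmb
  have hPa : Q.sigmaP (monom R a : FreeAlg R X) = Q.sigmaM a :=
    sigmaP_eq_of_uniform Q (by rw [hsa]; exact Finset.mem_singleton_self a)
      (by intro m hm; rw [hsa] at hm; rw [Finset.mem_singleton.mp hm])
  have hPb : Q.sigmaP (monom R b : FreeAlg R X) = Q.sigmaM b :=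
    sigmaP_eq_of_uniform Q (by rw [hsb]; exact Finset.mem_singleton_self b)
      (by intro m hm; rw [hsb] at hm; rw [Finset.mem_singleton.mp hm])
  refine ⟨⟨(u, w), hfsubh hx⟩, ⟨⟨(v, w), hPa ▸ hva⟩, ?_⟩, ⟨⟨(u, v'), hPb ▸ hvb⟩, ?_⟩,
    ⟨⟨(u, w), hfsubP hx⟩, ?_⟩, hfsubh, hfsubP, ?_⟩
  · intro m hm m' hm'
    rw [hsa] at hm hm'
    rw [Finset.mem_singleton.mp hm, Finset.mem_singleton.mp hm']
  · intro m hm m' hm'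
    rw [hsb] at hm hm'
    rw [Finset.mem_singleton.mp hm, Finset.mem_singleton.mp hm']
  · intro m hm m' hm'
    rw [hσagb m hm, hσagb m' hm']
  · intro huf
    have hσf : ∀ m ∈ (f.coeff : FreeMonoid X →₀ R).support,
        Q.sigmaM m = Q.sigmaM (a * mg * b) := fun m hm => huf.2 m hm _ hmf
    have hPf : Q.sigmaP f = Q.sigmaM (a * mg * b) := sigmaP_eq_of_uniform Q hmf hσf
    refine ⟨⟨⟨(u, w), hfsubh hx⟩, ?_⟩, hPagb.trans hPf.symm⟩
    intro m hm m' hm'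
    have key : ∀ n ∈ (h.coeff : FreeMonoid X →₀ R).support,
        Q.sigmaM n = Q.sigmaM (a * mg * b) := by
      intro n hn
      rcases Finset.mem_union.mp (hsupph hn) with h1 | h1
      · exact hσf n h1
      · exact hσagb n h1
    rw [key m hm, key m' hm']
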